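/- Let γ ∈ ℝ, let p ∈ [1,∞], take the specific forcing term f(x,t) := (1+t)^{-γ} 𝟙_{B_1(0)}(x), and let g : (0,∞) → (0,∞) be measurable with g(t) → ∞ and g(t)/t^θ → 0 as t → ∞. Then for all 0 < ν < μ < ∞ there exist c > 0 and T ≥ 2 such that for all t ≥ T the mild solution u satisfies: if N < 4β, ‖u(·,t)‖_{L^p({x : ν g(t) < |x| < μ g(t)})} ≥ c g(t)^{N/p} R(t) with R(t) = t^{-σ*+1-γ} for γ < 1, t^{-σ*} log t for γ = 1, t^{-σ*} for γ > 1; and if N = 4β, the same lower bound holds with R(t) replaced by log(t^θ/g(t)) R(t) (with g(t)^{N/p} := 1 when p = ∞). (This shows the intermediate-region upper estimates are sharp.) -/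

import Mathlib

open MeasureTheory Real Set Pointwise
open scoped ENNReal

noncomputable section

/-- Euclidean space ℝ^N. -/
abbrev Euc (N : ℕ) : Type := EuclideanSpace ℝ (Fin N)

/-- The self-similarity exponent θ := α/(2β). -/
def thetaV (α β : ℝ) : ℝ := α / (2 * β)

/-- σ* := 1 - α + Nθ. -/
def sigmaStar (N : ℕ) (α β : ℝ) : ℝ := 1 - α + (N : ℝ) * thetaV α β

/-- σ(p) := σ* - Nθ/p (with σ(∞) = σ*, since (∞ : ℝ≥0∞).toReal = 0 and x/0 = 0). -/
def sigmaP (N : ℕ) (α β : ℝ) (p : ℝ≥0∞) : ℝ :=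
  sigmaStar N α β - (N : ℝ) * thetaV α β / p.toReal

/-- p ∈ [1,∞] is subcritical: p arbitrary if N < 2β, p < ∞ if N = 2β,
and p < p_c := N/(N-2β) if N > 2β. -/
def Subcritical (N : ℕ) (β : ℝ) (p : ℝ≥0∞) : Prop :=
  ((N : ℝ) < 2 * β) ∨ ((N : ℝ) = 2 * β ∧ p ≠ ∞) ∨
    (2 * β < (N : ℝ) ∧ p < ENNReal.ofReal ((N : ℝ) / ((N : ℝ) - 2 * β)))

/-- The kernel Y(x,t) := t^{-σ*} G(x t^{-θ}). -/
def kernelY (N : ℕ) (α β : ℝ) (G : Euc N → ℝ) (x : Euc N) (t : ℝ) : ℝ :=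
  t ^ (-(sigmaStar N α β)) * G ((t ^ (-(thetaV α β))) • x)

/-- The mild solution given by Duhamel's formula:
u(x,t) = ∫₀^t ∫_{ℝ^N} Y(x-y,t-s) f(y,s) dy ds. -/
def mildSol (N : ℕ) (α β : ℝ) (G : Euc N → ℝ) (f : Euc N → ℝ → ℝ) (x : Euc N) (t : ℝ) : ℝ :=
  ∫ s in Ioo (0 : ℝ) t, ∫ y, kernelY N α β G (x - y) (t - s) * f y s


/-!
For `x` in the annulus `ν g(t) < ‖x‖ < μ g(t)`, `y ∈ B₁` and `s ∈ (0, t/2)`, the rescaled point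
`ξ = (t - s)^(-θ) (x - y)` has norm at most `(t/2)^(-θ) (μ g(t) + 1)`, which tends to `0` because
`g(t) = o(t^θ)`. The lower bound on `G` near the origin then gives `G ξ ≥ K(t)` with `K(t) = c₁`
(if `N < 4β`) or `K(t) = (c₁/2) log(t^θ / g(t))` (if `N = 4β`), and together with
`(t - s)^(-σ*) ≥ t^(-σ*)` the Duhamel integral is at least
`|B₁| K(t) t^(-σ*) ∫₀^{t/2} (1 + s)^(-γ) ds` on the whole annulus.
That time integral is of order `t^(1-γ)`, `log t` or `1`, and the annulus has measure of order
`g(t)^N`, which gives the `Lᵖ` bound.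

The upper bounds on `G` serve only to make the Duhamel integrand integrable; without that, the
Bochner integrals defining `mildSol` would take the junk value `0`.
-/

section

open Filter Topology

lemma Measure.addHaar_real_annulus {E : Type*} [NormedAddCommGroup E] [NormedSpace ℝ E]
    [MeasurableSpace E] [BorelSpace E] [FiniteDimensional ℝ E] [Nontrivial E] (μ : Measure E)
    [μ.IsAddHaarMeasure] {a b : ℝ} (ha : 0 ≤ a) (hab : a < b) :
    μ.real {x | a < ‖x‖ ∧ ‖x‖ < b} =
      (b ^ Module.finrank ℝ E - a ^ Module.finrank ℝ E) * μ.real (Metric.ball 0 1) := by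
  have hS : {x : E | a < ‖x‖ ∧ ‖x‖ < b} = Metric.ball 0 b \ Metric.closedBall 0 a := by
    ext x; simp [and_comm]
  rw [hS, measureReal_sdiff (Metric.closedBall_subset_ball hab) measurableSet_closedBall,
    measureReal_def, measureReal_def, Measure.addHaar_ball μ 0 (ha.trans hab.le),
    Measure.addHaar_closedBall μ 0 ha, ENNReal.toReal_mul, ENNReal.toReal_mul,
    ENNReal.toReal_ofReal (by have := ha.trans hab.le; positivity),
    ENNReal.toReal_ofReal (by positivity), measureReal_def, sub_mul]

lemma ofReal_mul_measureReal_rpow_le_eLpNorm {X : Type*} [MeasurableSpace X] {μ : Measure X}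
    {S : Set X} {p : ℝ≥0∞} (hp : p ≠ 0) (hS : MeasurableSet S) (hS0 : μ S ≠ 0) (hSfin : μ S ≠ ∞)
    {u : X → ℝ} {A : ℝ} (hA : 0 ≤ A) (hu : ∀ x ∈ S, A ≤ u x) :
    ENNReal.ofReal (A * μ.real S ^ (1 / p.toReal)) ≤ eLpNorm u p (μ.restrict S) := by
  have hS0' : μ.restrict S ≠ 0 := by rwa [Ne, Measure.restrict_eq_zero]
  calc ENNReal.ofReal (A * μ.real S ^ (1 / p.toReal))
      = ‖A‖ₑ * μ.restrict S univ ^ (1 / p.toReal) := by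
        rw [ENNReal.ofReal_mul hA, Real.enorm_of_nonneg hA, Measure.restrict_apply_univ,
          measureReal_def, ← ENNReal.ofReal_rpow_of_nonneg ENNReal.toReal_nonneg (by positivity),
          ENNReal.ofReal_toReal hSfin]
    _ = eLpNorm (fun _ => A) p (μ.restrict S) := (eLpNorm_const A hp hS0').symm
    _ ≤ eLpNorm u p (μ.restrict S) := by
        refine eLpNorm_mono_ae (ae_restrict_of_forall_mem hS fun x hx => ?_)
        rw [Real.norm_of_nonneg hA]
        exact (hu x hx).trans (le_abs_self _)

lemma norm_sub_mem_Icc_of_mem_ball {E : Type*} [SeminormedAddCommGroup E] {x y : E} {a b : ℝ}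
    (ha : 2 ≤ a) (hx : a < ‖x‖ ∧ ‖x‖ < b) (hy : y ∈ Metric.ball (0 : E) 1) :
    1 ≤ ‖x - y‖ ∧ ‖x - y‖ ≤ b + 1 := by
  have := mem_ball_zero_iff.mp hy
  exact ⟨by linarith [norm_sub_norm_le x y], by linarith [norm_sub_le x y]⟩

lemma integrableOn_sub_rpow_mul_one_add_rpow {a : ℝ} (ha : -1 < a) (b c γ : ℝ) {t : ℝ}
    (ht : 0 ≤ t) :
    IntegrableOn (fun s => (b * (t - s) ^ a + c) * (1 + s) ^ (-γ)) (Ioo 0 t) := by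
  have hsing : IntervalIntegrable (fun s => (t - s) ^ a) volume 0 t := by
    simpa using
      ((intervalIntegral.intervalIntegrable_rpow' (a := 0) (b := t) ha).comp_sub_left t).symm
  have hIoc : IntegrableOn (fun s => b * (t - s) ^ a + c) (Ioc 0 t) :=
    ((intervalIntegrable_iff_integrableOn_Ioc_of_le ht).mp (hsing.const_mul b)).add
      (integrableOn_const measure_Ioc_lt_top.ne)
  refine (((integrableOn_Icc_iff_integrableOn_Ioc).mpr hIoc).mul_continuousOn ?_
    isCompact_Icc).mono_set Ioo_subset_Icc_self
  exact (continuousOn_const.add continuousOn_id).rpow_const fun s hs =>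
    Or.inl (by simp only [Pi.add_apply, id]; linarith [hs.1])

lemma integral_Ioo_one_add_rpow_neg {T : ℝ} (hT : 0 ≤ T) (γ : ℝ) :
    ∫ s in Ioo 0 T, (1 + s) ^ (-γ) = ∫ u in 1..1 + T, u ^ (-γ) := by
  rw [← integral_Ioc_eq_integral_Ioo, ← intervalIntegral.integral_of_le hT,
    intervalIntegral.integral_comp_add_left (fun u => u ^ (-γ)), add_zero]

lemma integral_Ioo_one_add_rpow_neg_of_ne_one {T : ℝ} (hT : 0 ≤ T) {γ : ℝ} (hγ : γ ≠ 1) :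
    ∫ s in Ioo 0 T, (1 + s) ^ (-γ) = ((1 + T) ^ (1 - γ) - 1) / (1 - γ) := by
  have h0 : (0 : ℝ) ∉ uIcc 1 (1 + T) := by
    rw [uIcc_of_le (by linarith)]; exact fun h => by linarith [h.1]
  rw [integral_Ioo_one_add_rpow_neg hT, integral_rpow (Or.inr ⟨by contrapose! hγ; linarith, h0⟩),
    Real.one_rpow, neg_add_eq_sub]

lemma eventually_mul_rpow_le_integral_of_lt_one {γ : ℝ} (hγ : γ < 1) :
    ∃ c : ℝ, 0 < c ∧ ∀ᶠ t in atTop,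
      c * t ^ (1 - γ) ≤ ∫ s in Ioo 0 (t / 2), (1 + s) ^ (-γ) := by
  refine ⟨2 ^ (γ - 1) / (2 * (1 - γ)), by have := sub_pos.mpr hγ; positivity, ?_⟩
  have htend : Tendsto (fun t : ℝ => (t / 2) ^ (1 - γ)) atTop atTop :=
    (tendsto_rpow_atTop (by linarith)).comp (tendsto_id.atTop_div_const two_pos)
  filter_upwards [htend.eventually_ge_atTop 2, eventually_gt_atTop 0] with t h2 ht
  have hhalf : (t / 2) ^ (1 - γ) = 2 ^ (γ - 1) * t ^ (1 - γ) := by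
    rw [Real.div_rpow ht.le zero_le_two, div_eq_inv_mul, ← Real.rpow_neg zero_le_two, neg_sub]
  have hmono : (t / 2) ^ (1 - γ) ≤ (1 + t / 2) ^ (1 - γ) :=
    Real.rpow_le_rpow (by positivity) (by linarith) (by linarith)
  have hc : 2 ^ (γ - 1) / (2 * (1 - γ)) * t ^ (1 - γ) * (1 - γ) = (t / 2) ^ (1 - γ) / 2 := by
    rw [hhalf]; field_simp [(sub_pos.mpr hγ).ne']
  rw [integral_Ioo_one_add_rpow_neg_of_ne_one (by positivity) hγ.ne, le_div_iff₀ (by linarith), hc]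
  linarith

lemma eventually_mul_log_le_integral_inv :
    ∃ c : ℝ, 0 < c ∧ ∀ᶠ t in atTop,
      c * Real.log t ≤ ∫ s in Ioo 0 (t / 2), (1 + s) ^ (-(1 : ℝ)) := by
  refine ⟨1 / 2, by norm_num, ?_⟩
  filter_upwards [eventually_ge_atTop 4] with t ht
  have hint : ∫ s in Ioo 0 (t / 2), (1 + s) ^ (-(1 : ℝ)) = Real.log (1 + t / 2) := by
    rw [integral_Ioo_one_add_rpow_neg (by positivity)]
    simp only [Real.rpow_neg_one]
    rw [integral_inv_of_pos one_pos (by positivity), div_one]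
  have hlog4 : 2 * Real.log 2 ≤ Real.log t := by
    rw [← Real.log_rpow two_pos]; exact Real.log_le_log (by positivity) (by norm_num; linarith)
  have hmono : Real.log (t / 2) ≤ Real.log (1 + t / 2) :=
    Real.log_le_log (by positivity) (by linarith)
  rw [hint]
  linarith [Real.log_div (by positivity : t ≠ 0) two_ne_zero]

lemma eventually_le_integral_of_one_lt {γ : ℝ} (hγ : 1 < γ) :
    ∃ c : ℝ, 0 < c ∧ ∀ᶠ t in atTop, c ≤ ∫ s in Ioo 0 (t / 2), (1 + s) ^ (-γ) := by
  refine ⟨(1 - 2 ^ (1 - γ)) / (γ - 1), div_pos (sub_pos.mpr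
    (Real.rpow_lt_one_of_one_lt_of_neg one_lt_two (by linarith))) (by linarith), ?_⟩
  filter_upwards [eventually_ge_atTop 2] with t ht
  have hc : (1 - 2 ^ (1 - γ)) / (γ - 1) * (1 - γ) = 2 ^ (1 - γ) - 1 := by
    field_simp [(sub_pos.mpr hγ).ne']; ring
  have hmono : (1 + t / 2) ^ (1 - γ) ≤ 2 ^ (1 - γ) :=
    Real.rpow_le_rpow_of_nonpos two_pos (by linarith) (by linarith)
  rw [integral_Ioo_one_add_rpow_neg_of_ne_one (by positivity) hγ.ne',
    le_div_iff_of_neg (by linarith), hc]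
  linarith

lemma exists_eventually_mul_le_rpow_mul_integral (σ γ : ℝ) :
    (γ < 1 → ∃ c : ℝ, 0 < c ∧ ∀ᶠ t in atTop,
      c * t ^ (-σ + 1 - γ) ≤ t ^ (-σ) * ∫ s in Ioo 0 (t / 2), (1 + s) ^ (-γ)) ∧
    (γ = 1 → ∃ c : ℝ, 0 < c ∧ ∀ᶠ t in atTop,
      c * (t ^ (-σ) * Real.log t) ≤ t ^ (-σ) * ∫ s in Ioo 0 (t / 2), (1 + s) ^ (-γ)) ∧
    (1 < γ → ∃ c : ℝ, 0 < c ∧ ∀ᶠ t in atTop,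
      c * t ^ (-σ) ≤ t ^ (-σ) * ∫ s in Ioo 0 (t / 2), (1 + s) ^ (-γ)) := by
  refine ⟨fun hγ => ?_, fun hγ => ?_, fun hγ => ?_⟩
  · obtain ⟨c, hc, h⟩ := eventually_mul_rpow_le_integral_of_lt_one hγ
    refine ⟨c, hc, ?_⟩
    filter_upwards [h, eventually_gt_atTop 0] with t h ht
    rw [sub_eq_add_neg, add_assoc, Real.rpow_add ht, ← sub_eq_add_neg, mul_left_comm]
    gcongr
  · subst hγ
    obtain ⟨c, hc, h⟩ := eventually_mul_log_le_integral_inv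
    refine ⟨c, hc, ?_⟩
    filter_upwards [h, eventually_gt_atTop 0] with t h ht
    rw [mul_left_comm]
    gcongr
  · obtain ⟨c, hc, h⟩ := eventually_le_integral_of_one_lt hγ
    refine ⟨c, hc, ?_⟩
    filter_upwards [h, eventually_gt_atTop 0] with t h ht
    rw [mul_comm]
    gcongr

section Profile

variable {E : Type*} [NormedAddCommGroup E] [NormedSpace ℝ E] {F : E → ℝ} {g : ℝ → ℝ} {θ μ : ℝ}

lemma norm_rpow_neg_smul_le (hθ : 0 ≤ θ) {ρ r : ℝ} (hρ : 0 < ρ) (hr : ρ ≤ r) {z : E} {R : ℝ}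
    (hz : ‖z‖ ≤ R) : ‖r ^ (-θ) • z‖ ≤ ρ ^ (-θ) * R := by
  rw [norm_smul_of_nonneg (by have := hρ.trans_le hr; positivity)]
  exact mul_le_mul (Real.rpow_le_rpow_of_nonpos hρ hr (neg_nonpos.mpr hθ)) hz (norm_nonneg z)
    (by positivity)

lemma tendsto_log_rpow_div_atTop (hgpos : ∀ t, 0 < t → 0 < g t)
    (hgo : Tendsto (fun t => g t / t ^ θ) atTop (𝓝 0)) :
    Tendsto (fun t => Real.log (t ^ θ / g t)) atTop atTop := by
  have hpos : Tendsto (fun t => g t / t ^ θ) atTop (𝓝[>] 0) :=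
    tendsto_nhdsWithin_of_tendsto_nhds_of_eventually_within _ hgo <| by
      filter_upwards [eventually_gt_atTop 0] with t ht using div_pos (hgpos t ht) (by positivity)
  refine Real.tendsto_log_atTop.comp ?_
  convert hpos.inv_tendsto_nhdsGT_zero using 2
  rw [Pi.inv_apply, inv_div]

lemma eventually_half_log_le_neg_log (hgpos : ∀ t, 0 < t → 0 < g t)
    (hgtop : Tendsto g atTop atTop) (hgo : Tendsto (fun t => g t / t ^ θ) atTop (𝓝 0))
    (hμ : 0 ≤ μ) :
    ∀ᶠ t in atTop, Real.log (t ^ θ / g t) / 2 ≤ -Real.log ((t / 2) ^ (-θ) * (μ * g t + 1)) := by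
  filter_upwards [(tendsto_log_rpow_div_atTop hgpos hgo).eventually_ge_atTop
      (2 * (θ * Real.log 2 + Real.log (μ + 1))), hgtop.eventually_ge_atTop 1,
      eventually_gt_atTop 0] with t hL hg ht
  have hR : Real.log (μ * g t + 1) ≤ Real.log (μ + 1) + Real.log (g t) := by
    rw [← Real.log_mul (by linarith) (by linarith)]
    exact Real.log_le_log (by positivity) (by nlinarith)
  rw [Real.log_div (by positivity) (by linarith), Real.log_rpow ht] at hL ⊢
  rw [Real.log_mul (by positivity) (by positivity), Real.log_rpow (by positivity),
    Real.log_div ht.ne' two_ne_zero]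
  linarith

lemma eventually_rpow_neg_mul_le_one (hgpos : ∀ t, 0 < t → 0 < g t)
    (hgtop : Tendsto g atTop atTop) (hgo : Tendsto (fun t => g t / t ^ θ) atTop (𝓝 0))
    (hμ : 0 ≤ μ) :
    ∀ᶠ t in atTop, (t / 2) ^ (-θ) * (μ * g t + 1) ≤ 1 := by
  filter_upwards [eventually_half_log_le_neg_log hgpos hgtop hgo hμ,
    (tendsto_log_rpow_div_atTop hgpos hgo).eventually_ge_atTop 0,
    eventually_gt_atTop 0] with t h hL ht
  have := hgpos t ht
  exact (Real.log_nonpos_iff (by positivity)).mp (by linarith)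

lemma eventually_le_apply_rpow_neg_smul (hθ : 0 < θ) (hgpos : ∀ t, 0 < t → 0 < g t)
    (hgtop : Tendsto g atTop atTop) (hgo : Tendsto (fun t => g t / t ^ θ) atTop (𝓝 0))
    (hμ : 0 ≤ μ) {c : ℝ} (hF : ∀ ξ : E, ξ ≠ 0 → ‖ξ‖ ≤ 1 → c ≤ F ξ) :
    ∀ᶠ t in atTop, ∀ z : E, 1 ≤ ‖z‖ → ‖z‖ ≤ μ * g t + 1 → ∀ r ∈ Icc (t / 2) t,
      c ≤ F (r ^ (-θ) • z) := by
  filter_upwards [eventually_rpow_neg_mul_le_one hgpos hgtop hgo hμ, eventually_gt_atTop 0]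
    with t h1 ht z hz hzR r hr
  have hr0 : 0 < r := by linarith [hr.1]
  exact hF _ (smul_ne_zero (by positivity) (norm_pos_iff.mp (by linarith)))
    ((norm_rpow_neg_smul_le hθ.le (by positivity) hr.1 hzR).trans h1)

lemma eventually_half_log_mul_le_apply_rpow_neg_smul (hθ : 0 < θ)
    (hgpos : ∀ t, 0 < t → 0 < g t) (hgtop : Tendsto g atTop atTop)
    (hgo : Tendsto (fun t => g t / t ^ θ) atTop (𝓝 0)) (hμ : 0 ≤ μ) {c : ℝ} (hc : 0 ≤ c)
    (hF : ∀ ξ : E, ξ ≠ 0 → ‖ξ‖ ≤ 1 → c * (1 + |Real.log ‖ξ‖|) ≤ F ξ) :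
    ∀ᶠ t in atTop, ∀ z : E, 1 ≤ ‖z‖ → ‖z‖ ≤ μ * g t + 1 → ∀ r ∈ Icc (t / 2) t,
      c / 2 * Real.log (t ^ θ / g t) ≤ F (r ^ (-θ) • z) := by
  filter_upwards [eventually_half_log_le_neg_log hgpos hgtop hgo hμ,
    eventually_rpow_neg_mul_le_one hgpos hgtop hgo hμ, eventually_gt_atTop 0]
    with t hlog h1 ht z hz hzR r hr
  have hr0 : 0 < r := by linarith [hr.1]
  have hξ0 : r ^ (-θ) • z ≠ 0 := smul_ne_zero (by positivity) (norm_pos_iff.mp (by linarith))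
  have hξ := norm_rpow_neg_smul_le hθ.le (by positivity) hr.1 hzR
  have hlogξ : Real.log ‖r ^ (-θ) • z‖ ≤ Real.log ((t / 2) ^ (-θ) * (μ * g t + 1)) :=
    Real.log_le_log (norm_pos_iff.mpr hξ0) hξ
  refine le_trans ?_ (hF _ hξ0 (hξ.trans h1))
  rw [div_mul_eq_mul_div, mul_div_assoc]
  exact mul_le_mul_of_nonneg_left (by linarith [neg_le_abs (Real.log ‖r ^ (-θ) • z‖)]) hc

end Profile

section Kernel

variable {N : ℕ} {α β : ℝ} {G : Euc N → ℝ} {C₁ : ℝ}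

lemma thetaV_pos (hα : 0 < α) (hβ : 0 < β) : 0 < thetaV α β :=
  div_pos hα (by positivity)

lemma sigmaStar_pos (hα : α < 1) (hθ : 0 ≤ thetaV α β) : 0 < sigmaStar N α β := by
  unfold sigmaStar; nlinarith [N.cast_nonneg (α := ℝ)]

lemma neg_sigmaStar_add_thetaV_mul (hβ : β ≠ 0) :
    -sigmaStar N α β + thetaV α β * (N + 2 * β) = 2 * α - 1 := by
  unfold sigmaStar thetaV; field_simp; ring

lemma kernelY_pos (hGpos : ∀ ξ : Euc N, ξ ≠ 0 → 0 < G ξ) {z : Euc N} (hz : z ≠ 0) {r : ℝ}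
    (hr : 0 < r) : 0 < kernelY N α β G z r :=
  mul_pos (by positivity) (hGpos _ (smul_ne_zero (by positivity) hz))

lemma kernelY_le_of_one_le_norm_smul (hβ : 0 < β) (hC₁ : 0 ≤ C₁)
    (hGout : ∀ ξ : Euc N, 1 ≤ ‖ξ‖ → G ξ ≤ C₁ * ‖ξ‖ ^ (-((N : ℝ) + 2 * β)))
    {z : Euc N} (hz : 1 ≤ ‖z‖) {r : ℝ} (hr : 0 < r) (hξ : 1 ≤ ‖r ^ (-thetaV α β) • z‖) :
    kernelY N α β G z r ≤ C₁ * r ^ (2 * α - 1) := by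
  have hz' : ‖z‖ ^ (-((N : ℝ) + 2 * β)) ≤ 1 :=
    Real.rpow_le_one_of_one_le_of_nonpos hz (by linarith [N.cast_nonneg (α := ℝ)])
  have hGξ : G (r ^ (-thetaV α β) • z) ≤ C₁ * r ^ (thetaV α β * (N + 2 * β)) := by
    calc G (r ^ (-thetaV α β) • z)
        ≤ C₁ * (r ^ (thetaV α β * (N + 2 * β)) * ‖z‖ ^ (-((N : ℝ) + 2 * β))) := by
          convert hGout _ hξ using 2
          rw [norm_smul_of_nonneg (by positivity), Real.mul_rpow (by positivity) (norm_nonneg z),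
            ← Real.rpow_mul hr.le]
          ring_nf
      _ ≤ C₁ * r ^ (thetaV α β * (N + 2 * β)) := by
          gcongr; exact mul_le_of_le_one_right (by positivity) hz'
  calc kernelY N α β G z r
      ≤ r ^ (-sigmaStar N α β) * (C₁ * r ^ (thetaV α β * (N + 2 * β))) := by
        unfold kernelY; gcongr
    _ = C₁ * r ^ (2 * α - 1) := by
        rw [mul_left_comm, ← Real.rpow_add hr, neg_sigmaStar_add_thetaV_mul hβ.ne']

lemma kernelY_le_of_norm_smul_le_one (hα1 : α < 1) (hθ : 0 < thetaV α β) (hC₁ : 0 ≤ C₁)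
    (hGpos : ∀ ξ : Euc N, ξ ≠ 0 → 0 < G ξ)
    (hGlog : ∀ ξ : Euc N, ξ ≠ 0 → ‖ξ‖ ≤ 1 → G ξ ≤ C₁ * (1 + |Real.log ‖ξ‖|))
    {z : Euc N} (hz : 1 ≤ ‖z‖) {r t : ℝ} (hr : 0 < r) (hrt : r ≤ t)
    (hξ : ‖r ^ (-thetaV α β) • z‖ ≤ 1) :
    kernelY N α β G z r ≤ C₁ * (1 + thetaV α β * Real.log t) := by
  set ξ := r ^ (-thetaV α β) • z
  have hξ0 : ξ ≠ 0 := smul_ne_zero (by positivity) (norm_pos_iff.mp (by linarith))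
  have hlogξ : Real.log ‖ξ‖ = -thetaV α β * Real.log r + Real.log ‖z‖ := by
    rw [norm_smul_of_nonneg (by positivity), Real.log_mul (by positivity) (by positivity),
      Real.log_rpow hr]
  have hlogξ_nonpos : Real.log ‖ξ‖ ≤ 0 := Real.log_nonpos (norm_nonneg _) hξ
  -- `‖ξ‖ ≤ 1 ≤ ‖z‖` forces `r ≥ 1`, so the prefactor `r ^ (-σ*)` is at most one
  have hr1 : 1 ≤ r := by
    by_contra! h
    have := Real.log_neg hr h
    nlinarith [Real.log_nonneg hz]
  have hGξ : G ξ ≤ C₁ * (1 + thetaV α β * Real.log t) := by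
    refine (hGlog ξ hξ0 hξ).trans ?_
    gcongr
    rw [abs_of_nonpos hlogξ_nonpos, hlogξ]
    nlinarith [Real.log_nonneg hz, Real.log_le_log hr hrt]
  calc kernelY N α β G z r ≤ 1 * G ξ := by
        unfold kernelY
        gcongr
        · exact (hGpos ξ hξ0).le
        · exact Real.rpow_le_one_of_one_le_of_nonpos hr1
            (neg_nonpos.mpr (sigmaStar_pos hα1 hθ.le).le)
    _ ≤ C₁ * (1 + thetaV α β * Real.log t) := by rwa [one_mul]

/-- Since `2α - 1 > -1`, the right-hand side is integrable in `r` near `0`. -/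
lemma kernelY_le (hα1 : α < 1) (hβ : 0 < β) (hθ : 0 < thetaV α β) (hC₁ : 0 ≤ C₁)
    (hGpos : ∀ ξ : Euc N, ξ ≠ 0 → 0 < G ξ)
    (hGout : ∀ ξ : Euc N, 1 ≤ ‖ξ‖ → G ξ ≤ C₁ * ‖ξ‖ ^ (-((N : ℝ) + 2 * β)))
    (hGlog : ∀ ξ : Euc N, ξ ≠ 0 → ‖ξ‖ ≤ 1 → G ξ ≤ C₁ * (1 + |Real.log ‖ξ‖|))
    {z : Euc N} (hz : 1 ≤ ‖z‖) {r t : ℝ} (hr : 0 < r) (hrt : r ≤ t) (ht : 1 ≤ t) :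
    kernelY N α β G z r ≤ C₁ * r ^ (2 * α - 1) + C₁ * (1 + thetaV α β * Real.log t) := by
  have h₁ : 0 ≤ C₁ * r ^ (2 * α - 1) := by positivity
  have h₂ : 0 ≤ C₁ * (1 + thetaV α β * Real.log t) := by
    have := Real.log_nonneg ht; positivity
  rcases le_total 1 ‖r ^ (-thetaV α β) • z‖ with hξ | hξ
  · linarith [kernelY_le_of_one_le_norm_smul hβ hC₁ hGout hz hr hξ]
  · linarith [kernelY_le_of_norm_smul_le_one hα1 hθ hC₁ hGpos hGlog hz hr hrt hξ]

lemma mul_rpow_neg_sigmaStar_le_kernelY (hσ : 0 ≤ sigmaStar N α β) {K : ℝ} (hK : 0 ≤ K)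
    {z : Euc N} {r t : ℝ} (hr : 0 < r) (hrt : r ≤ t) (hKG : K ≤ G (r ^ (-thetaV α β) • z)) :
    K * t ^ (-sigmaStar N α β) ≤ kernelY N α β G z r := by
  rw [kernelY, mul_comm]
  exact mul_le_mul (Real.rpow_le_rpow_of_nonpos hr hrt (neg_nonpos.mpr hσ)) hKG hK
    (by positivity)

def ballForcing (N : ℕ) (γ : ℝ) (y : Euc N) (s : ℝ) : ℝ :=
  (Metric.ball (0 : Euc N) 1).indicator (fun _ => (1 + s) ^ (-γ)) y

lemma ballForcing_eq (γ s : ℝ) (y : Euc N) :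
    ballForcing N γ y s = (1 + s) ^ (-γ) * (Metric.ball (0 : Euc N) 1).indicator 1 y := by
  by_cases hy : y ∈ Metric.ball (0 : Euc N) 1 <;> simp [ballForcing, hy]

lemma measurable_kernelY_mul_ballForcing (hG : Measurable G) (γ : ℝ) (x : Euc N) (t : ℝ) :
    Measurable fun q : ℝ × Euc N =>
      kernelY N α β G (x - q.2) (t - q.1) * ballForcing N γ q.2 q.1 := by
  simp only [ballForcing_eq, kernelY]
  have : Measurable ((Metric.ball (0 : Euc N) 1).indicator (1 : Euc N → ℝ)) :=
    measurable_const.indicator measurableSet_ball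
  fun_prop


lemma integrable_kernelY_mul_ballForcing (hα0 : 0 < α) (hα1 : α < 1) (hβ : 0 < β)
    (hG : Measurable G) (hC₁ : 0 ≤ C₁) (hGpos : ∀ ξ : Euc N, ξ ≠ 0 → 0 < G ξ)
    (hGout : ∀ ξ : Euc N, 1 ≤ ‖ξ‖ → G ξ ≤ C₁ * ‖ξ‖ ^ (-((N : ℝ) + 2 * β)))
    (hGlog : ∀ ξ : Euc N, ξ ≠ 0 → ‖ξ‖ ≤ 1 → G ξ ≤ C₁ * (1 + |Real.log ‖ξ‖|))
    (γ : ℝ) {t : ℝ} (ht : 1 ≤ t) {x : Euc N}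
    (hx : ∀ y ∈ Metric.ball (0 : Euc N) 1, 1 ≤ ‖x - y‖) :
    Integrable
      (fun q : ℝ × Euc N => kernelY N α β G (x - q.2) (t - q.1) * ballForcing N γ q.2 q.1)
      ((volume.restrict (Ioo 0 t)).prod volume) := by
  set M : ℝ → ℝ := fun s =>
    (C₁ * (t - s) ^ (2 * α - 1) + C₁ * (1 + thetaV α β * Real.log t)) * (1 + s) ^ (-γ)
  have hM : Integrable M (volume.restrict (Ioo 0 t)) :=
    integrableOn_sub_rpow_mul_one_add_rpow (by linarith) _ _ γ (by linarith)
  have hball : Integrable ((Metric.ball (0 : Euc N) 1).indicator (1 : Euc N → ℝ)) :=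
    (integrable_indicator_iff measurableSet_ball).mpr (integrableOn_const measure_ball_lt_top.ne)
  refine (hM.mul_prod hball).mono'
    (measurable_kernelY_mul_ballForcing hG γ x t).aestronglyMeasurable ?_
  rw [← Measure.restrict_univ (μ := (volume : Measure (Euc N))), Measure.prod_restrict]
  refine ae_restrict_of_forall_mem (measurableSet_Ioo.prod MeasurableSet.univ) ?_
  rintro ⟨s, y⟩ ⟨hs, -⟩
  by_cases hy : y ∈ Metric.ball (0 : Euc N) 1
  · have hxy := hx y hy
    have hts : 0 < t - s := by linarith [hs.2]
    have hY := kernelY_pos (α := α) (β := β) hGpos (norm_pos_iff.mp (by linarith)) hts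
    simp only [ballForcing, indicator_of_mem hy, Pi.one_apply, mul_one, M]
    rw [Real.norm_of_nonneg (by have := hs.1; positivity)]
    refine mul_le_mul_of_nonneg_right ?_ (by have := hs.1; positivity)
    exact kernelY_le hα1 hβ (thetaV_pos hα0 hβ) hC₁ hGpos hGout hGlog hxy hts
      (by linarith [hs.1]) ht
  · simp [ballForcing, indicator_of_notMem hy]

lemma kernelY_mul_ballForcing_nonneg (hGpos : ∀ ξ : Euc N, ξ ≠ 0 → 0 < G ξ) (γ : ℝ)
    {x : Euc N} (hx : ∀ y ∈ Metric.ball (0 : Euc N) 1, 1 ≤ ‖x - y‖) {r s : ℝ} (hr : 0 < r)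
    (hs : 0 < 1 + s) (y : Euc N) :
    0 ≤ kernelY N α β G (x - y) r * ballForcing N γ y s := by
  by_cases hy : y ∈ Metric.ball (0 : Euc N) 1
  · have hY := kernelY_pos (α := α) (β := β) hGpos (norm_pos_iff.mp (by linarith [hx y hy])) hr
    simp only [ballForcing, indicator_of_mem hy]
    positivity
  · simp [ballForcing, indicator_of_notMem hy]

lemma mul_rpow_le_integral_kernelY_mul_ballForcing (hσ : 0 ≤ sigmaStar N α β) (γ : ℝ)
    {x : Euc N} {K : ℝ} (hK : 0 ≤ K) {s t : ℝ} (hs : 0 < s) (hst : s < t)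
    (hKG : ∀ y ∈ Metric.ball (0 : Euc N) 1, K ≤ G ((t - s) ^ (-thetaV α β) • (x - y)))
    (hint : Integrable fun y => kernelY N α β G (x - y) (t - s) * ballForcing N γ y s) :
    volume.real (Metric.ball (0 : Euc N) 1) * K * t ^ (-sigmaStar N α β) * (1 + s) ^ (-γ) ≤
      ∫ y, kernelY N α β G (x - y) (t - s) * ballForcing N γ y s := by
  have hH_eq : (fun y => kernelY N α β G (x - y) (t - s) * ballForcing N γ y s) =
      (Metric.ball (0 : Euc N) 1).indicator
        fun y => kernelY N α β G (x - y) (t - s) * (1 + s) ^ (-γ) := by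
    ext y
    by_cases hy : y ∈ Metric.ball (0 : Euc N) 1 <;> simp [ballForcing, hy]
  rw [hH_eq, integral_indicator measurableSet_ball, mul_assoc, mul_assoc, ← smul_eq_mul]
  rw [hH_eq, integrable_indicator_iff measurableSet_ball] at hint
  refine setIntegral_ge_of_const_le measurableSet_ball measure_ball_lt_top.ne
    (fun y hy => ?_) hint
  rw [← mul_assoc]
  exact mul_le_mul_of_nonneg_right (mul_rpow_neg_sigmaStar_le_kernelY hσ hK
    (by linarith) (by linarith) (hKG y hy)) (by positivity)

lemma mildSol_ballForcing_ge (hα0 : 0 < α) (hα1 : α < 1) (hβ : 0 < β)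
    (hG : Measurable G) (hC₁ : 0 ≤ C₁) (hGpos : ∀ ξ : Euc N, ξ ≠ 0 → 0 < G ξ)
    (hGout : ∀ ξ : Euc N, 1 ≤ ‖ξ‖ → G ξ ≤ C₁ * ‖ξ‖ ^ (-((N : ℝ) + 2 * β)))
    (hGlog : ∀ ξ : Euc N, ξ ≠ 0 → ‖ξ‖ ≤ 1 → G ξ ≤ C₁ * (1 + |Real.log ‖ξ‖|))
    (γ : ℝ) {t : ℝ} (ht : 1 ≤ t) {x : Euc N}
    (hx : ∀ y ∈ Metric.ball (0 : Euc N) 1, 1 ≤ ‖x - y‖) {K : ℝ} (hK : 0 ≤ K)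
    (hKG : ∀ y ∈ Metric.ball (0 : Euc N) 1, ∀ r ∈ Icc (t / 2) t,
      K ≤ G (r ^ (-thetaV α β) • (x - y))) :
    volume.real (Metric.ball (0 : Euc N) 1) * K * t ^ (-sigmaStar N α β) *
        ∫ s in Ioo 0 (t / 2), (1 + s) ^ (-γ)
      ≤ mildSol N α β G (ballForcing N γ) x t := by
  set A := volume.real (Metric.ball (0 : Euc N) 1) * K * t ^ (-sigmaStar N α β)
  have hH := integrable_kernelY_mul_ballForcing hα0 hα1 hβ hG hC₁ hGpos hGout hGlog γ ht hx
  have hF := hH.integral_prod_left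
  have hsub : Ioo (0 : ℝ) (t / 2) ⊆ Ioo 0 t := Ioo_subset_Ioo_right (by linarith)
  have hσ := (sigmaStar_pos (N := N) hα1 (thetaV_pos hα0 hβ).le).le
  calc A * ∫ s in Ioo 0 (t / 2), (1 + s) ^ (-γ)
      = ∫ s in Ioo 0 (t / 2), A * (1 + s) ^ (-γ) := (integral_const_mul _ _).symm
    _ ≤ ∫ s in Ioo 0 (t / 2), ∫ y, kernelY N α β G (x - y) (t - s) * ballForcing N γ y s := by
        refine integral_mono_of_nonneg ?_ (IntegrableOn.mono_set hF hsub) ?_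
        · refine ae_restrict_of_forall_mem measurableSet_Ioo fun s hs => ?_
          have := hs.1
          positivity
        · filter_upwards [ae_restrict_of_ae_restrict_of_subset hsub hH.prod_right_ae,
            ae_restrict_mem measurableSet_Ioo] with s hint hs
          exact mul_rpow_le_integral_kernelY_mul_ballForcing hσ γ hK hs.1 (by linarith [hs.2])
            (fun y hy => hKG y hy _ ⟨by linarith [hs.2], by linarith [hs.1]⟩) hint
    _ ≤ mildSol N α β G (ballForcing N γ) x t :=
        setIntegral_mono_set hF (ae_restrict_of_forall_mem measurableSet_Ioo fun s hs =>
          integral_nonneg (kernelY_mul_ballForcing_nonneg hGpos γ hx (sub_pos.mpr hs.2)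
            (by linarith [hs.1]))) hsub.eventuallyLE

lemma exists_eventually_ofReal_le_eLpNorm_annulus (hN : 1 ≤ N) (hα0 : 0 < α) (hα1 : α < 1)
    (hβ : 0 < β) (hG : Measurable G) (hC₁ : 0 ≤ C₁) (hGpos : ∀ ξ : Euc N, ξ ≠ 0 → 0 < G ξ)
    (hGout : ∀ ξ : Euc N, 1 ≤ ‖ξ‖ → G ξ ≤ C₁ * ‖ξ‖ ^ (-((N : ℝ) + 2 * β)))
    (hGlog : ∀ ξ : Euc N, ξ ≠ 0 → ‖ξ‖ ≤ 1 → G ξ ≤ C₁ * (1 + |Real.log ‖ξ‖|))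
    (γ : ℝ) (p : ℝ≥0∞) (hp : p ≠ 0) (g : ℝ → ℝ) (hgtop : Tendsto g atTop atTop)
    (ν μ : ℝ) (hν : 0 < ν) (hνμ : ν < μ) ⦃k : ℝ → ℝ⦄ ⦃κ : ℝ⦄ (hκ : 0 < κ)
    (hk0 : ∀ᶠ t in atTop, 0 ≤ k t)
    (hkG : ∀ᶠ t in atTop, ∀ z : Euc N, 1 ≤ ‖z‖ → ‖z‖ ≤ μ * g t + 1 → ∀ r ∈ Icc (t / 2) t,
      κ * k t ≤ G (r ^ (-thetaV α β) • z))
    ⦃ρ : ℝ → ℝ⦄ (hρ : ∃ c : ℝ, 0 < c ∧ ∀ᶠ t in atTop,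
      c * ρ t ≤ t ^ (-sigmaStar N α β) * ∫ s in Ioo 0 (t / 2), (1 + s) ^ (-γ)) :
    ∃ c : ℝ, 0 < c ∧ ∀ᶠ t in atTop,
      ENNReal.ofReal (c * g t ^ ((N : ℝ) / p.toReal) * (k t * ρ t)) ≤
        eLpNorm (fun x => mildSol N α β G (ballForcing N γ) x t) p
          (volume.restrict {x : Euc N | ν * g t < ‖x‖ ∧ ‖x‖ < μ * g t}) := by
  obtain ⟨c, hc, hρ⟩ := hρ
  have : Nontrivial (Euc N) := by have : Nonempty (Fin N) := ⟨⟨0, hN⟩⟩; infer_instance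
  set vB := volume.real (Metric.ball (0 : Euc N) 1)
  have hvB : 0 < vB :=
    ENNReal.toReal_pos (Metric.measure_ball_pos volume 0 one_pos).ne' measure_ball_lt_top.ne
  set V := (μ ^ N - ν ^ N) * vB
  have hV : 0 < V := mul_pos (sub_pos.mpr (pow_lt_pow_left₀ hνμ hν.le (by omega))) hvB
  refine ⟨vB * κ * c * V ^ (1 / p.toReal), by positivity, ?_⟩
  filter_upwards [hk0, hkG, hρ, (hgtop.const_mul_atTop hν).eventually_ge_atTop 2,
    eventually_ge_atTop 1] with t hk0 hkG hρ hνg ht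
  set S := {x : Euc N | ν * g t < ‖x‖ ∧ ‖x‖ < μ * g t}
  have hg : 0 < g t := by nlinarith
  have hS : volume.real S = V * g t ^ N := by
    rw [Measure.addHaar_real_annulus volume (by positivity) (by gcongr),
      finrank_euclideanSpace_fin]
    ring
  have hS_pos := ENNReal.toReal_pos_iff.mp (hS ▸ (by positivity) : 0 < volume.real S)
  have hSmeas : MeasurableSet S :=
    (measurableSet_lt measurable_const measurable_norm).inter
      (measurableSet_lt measurable_norm measurable_const)
  set I := ∫ s in Ioo 0 (t / 2), (1 + s) ^ (-γ)
  have hI : 0 ≤ I := setIntegral_nonneg measurableSet_Ioo fun s hs => by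
    have := hs.1; positivity
  have hlow : ∀ x ∈ S, vB * (κ * k t) * t ^ (-sigmaStar N α β) * I ≤
      mildSol N α β G (ballForcing N γ) x t := by
    intro x hx
    have hxy := fun y (hy : y ∈ Metric.ball (0 : Euc N) 1) =>
      norm_sub_mem_Icc_of_mem_ball hνg hx hy
    exact mildSol_ballForcing_ge hα0 hα1 hβ hG hC₁ hGpos hGout hGlog γ ht
      (fun y hy => (hxy y hy).1) (by positivity)
      (fun y hy r hr => hkG _ (hxy y hy).1 (hxy y hy).2 r hr)
  refine (ENNReal.ofReal_le_ofReal ?_).trans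
    (ofReal_mul_measureReal_rpow_le_eLpNorm hp hSmeas hS_pos.1.ne' hS_pos.2.ne ?_ hlow)
  · rw [hS, Real.mul_rpow hV.le (by positivity), ← Real.rpow_natCast, ← Real.rpow_mul hg.le,
      mul_one_div]
    calc vB * κ * c * V ^ (1 / p.toReal) * g t ^ ((N : ℝ) / p.toReal) * (k t * ρ t)
        = vB * κ * k t * V ^ (1 / p.toReal) * g t ^ ((N : ℝ) / p.toReal) * (c * ρ t) := by
          ring
      _ ≤ vB * κ * k t * V ^ (1 / p.toReal) * g t ^ ((N : ℝ) / p.toReal) *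
          (t ^ (-sigmaStar N α β) * I) := by gcongr
      _ = _ := by ring
  · positivity

end Kernel

lemma exists_eventually_and_of_trichotomy {x : ℝ} {P Q R : ℝ → ℝ → Prop}
    (hP : x < 1 → ∃ c : ℝ, 0 < c ∧ ∀ᶠ t in atTop, P c t)
    (hQ : x = 1 → ∃ c : ℝ, 0 < c ∧ ∀ᶠ t in atTop, Q c t)
    (hR : 1 < x → ∃ c : ℝ, 0 < c ∧ ∀ᶠ t in atTop, R c t) :
    ∃ c : ℝ, 0 < c ∧ ∀ᶠ t in atTop, (x < 1 → P c t) ∧ (x = 1 → Q c t) ∧ (1 < x → R c t) := by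
  rcases lt_trichotomy x 1 with hx | hx | hx
  · obtain ⟨c, hc, h⟩ := hP hx
    exact ⟨c, hc, h.mono fun t ht =>
      ⟨fun _ => ht, fun h => absurd h hx.ne, fun h => absurd h hx.not_gt⟩⟩
  · obtain ⟨c, hc, h⟩ := hQ hx
    exact ⟨c, hc, h.mono fun t ht =>
      ⟨fun h => absurd h hx.not_lt, fun _ => ht, fun h => absurd h hx.not_gt⟩⟩
  · obtain ⟨c, hc, h⟩ := hR hx
    exact ⟨c, hc, h.mono fun t ht =>
      ⟨fun h => absurd h hx.not_gt, fun h => absurd h hx.ne', fun _ => ht⟩⟩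

lemma exists_two_le_forall_ge_of_or {A B : Prop} {P Q : ℝ → ℝ → Prop} (hAB : A ∨ B)
    (hBA : A → ¬B) (hP : A → ∃ c : ℝ, 0 < c ∧ ∀ᶠ t in atTop, P c t)
    (hQ : B → ∃ c : ℝ, 0 < c ∧ ∀ᶠ t in atTop, Q c t) :
    ∃ c T : ℝ, 0 < c ∧ 2 ≤ T ∧ ∀ t, T ≤ t → (A → P c t) ∧ (B → Q c t) := by
  obtain ⟨c, hc, h⟩ : ∃ c : ℝ, 0 < c ∧ ∀ᶠ t in atTop, (A → P c t) ∧ (B → Q c t) := by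
    rcases hAB with hA | hB
    · obtain ⟨c, hc, h⟩ := hP hA
      exact ⟨c, hc, h.mono fun t ht => ⟨fun _ => ht, fun hB => absurd hB (hBA hA)⟩⟩
    · obtain ⟨c, hc, h⟩ := hQ hB
      exact ⟨c, hc, h.mono fun t ht => ⟨fun hA => absurd hB (hBA hA), fun _ => ht⟩⟩
  obtain ⟨T, hT⟩ := eventually_atTop.mp h
  exact ⟨c, max T 2, hc, le_max_right _ _, fun t ht => hT t (le_of_max_le_left ht)⟩

end

theorem intermediate_lower_optimal_general
    (N : ℕ) (hN : 1 ≤ N) (α β : ℝ) (hα0 : 0 < α) (hα1 : α < 1)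
    (hβ0 : 0 < β) (hNβ : (N : ℝ) ≤ 4 * β)
    (G : Euc N → ℝ) (C₁ : ℝ) (hC₁ : 0 < C₁)
    (hGcont : ContinuousOn G {(0 : Euc N)}ᶜ)
    (hGpos : ∀ ξ : Euc N, ξ ≠ 0 → 0 < G ξ)
    (hGin₁ : (N : ℝ) < 4 * β → ∀ ξ : Euc N, ξ ≠ 0 → ‖ξ‖ ≤ 1 → G ξ ≤ C₁)
    (hGin₂ : (N : ℝ) = 4 * β → ∀ ξ : Euc N, ξ ≠ 0 → ‖ξ‖ ≤ 1 →
      G ξ ≤ C₁ * (1 + |Real.log ‖ξ‖|))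
    (hGout : ∀ ξ : Euc N, 1 ≤ ‖ξ‖ → G ξ ≤ C₁ * ‖ξ‖ ^ (-((N : ℝ) + 2 * β)))
    (c₁ : ℝ) (hc₁ : 0 < c₁)
    (hGlow₁ : (N : ℝ) < 4 * β → ∀ ξ : Euc N, ξ ≠ 0 → ‖ξ‖ ≤ 1 → c₁ ≤ G ξ)
    (hGlow₂ : (N : ℝ) = 4 * β → ∀ ξ : Euc N, ξ ≠ 0 → ‖ξ‖ ≤ 1 →
      c₁ * (1 + |Real.log ‖ξ‖|) ≤ G ξ)
    (γ : ℝ)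
    (p : ℝ≥0∞) (hp1 : 1 ≤ p)
    (g : ℝ → ℝ) (hgpos : ∀ t : ℝ, 0 < t → 0 < g t)
    (hgtop : Filter.Tendsto g Filter.atTop Filter.atTop)
    (hgo : Filter.Tendsto (fun t => g t / t ^ thetaV α β) Filter.atTop (nhds 0)) :
    ∀ ν μ : ℝ, 0 < ν → ν < μ → ∃ c T : ℝ, 0 < c ∧ 2 ≤ T ∧ ∀ t : ℝ, T ≤ t →
      ((N : ℝ) < 4 * β →
        (γ < 1 → ENNReal.ofReal (c * g t ^ ((N : ℝ) / p.toReal) * (t ^ (-sigmaStar N α β + 1 - γ))) ≤ eLpNorm (fun x => mildSol N α β G (fun (y : Euc N) (s : ℝ) => Set.indicator (Metric.ball (0 : Euc N) 1) (fun _ => (1 + s) ^ (-γ)) y) x t) p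
          (volume.restrict {x : Euc N | ν * g t < ‖x‖ ∧ ‖x‖ < μ * g t})) ∧
        (γ = 1 → ENNReal.ofReal (c * g t ^ ((N : ℝ) / p.toReal) * (t ^ (-sigmaStar N α β) * Real.log t)) ≤ eLpNorm (fun x => mildSol N α β G (fun (y : Euc N) (s : ℝ) => Set.indicator (Metric.ball (0 : Euc N) 1) (fun _ => (1 + s) ^ (-γ)) y) x t) p
          (volume.restrict {x : Euc N | ν * g t < ‖x‖ ∧ ‖x‖ < μ * g t})) ∧
        (1 < γ → ENNReal.ofReal (c * g t ^ ((N : ℝ) / p.toReal) * (t ^ (-sigmaStar N α β))) ≤ eLpNorm (fun x => mildSol N α β G (fun (y : Euc N) (s : ℝ) => Set.indicator (Metric.ball (0 : Euc N) 1) (fun _ => (1 + s) ^ (-γ)) y) x t) p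
          (volume.restrict {x : Euc N | ν * g t < ‖x‖ ∧ ‖x‖ < μ * g t}))) ∧
      ((N : ℝ) = 4 * β →
        (γ < 1 → ENNReal.ofReal (c * g t ^ ((N : ℝ) / p.toReal) * (Real.log (t ^ thetaV α β / g t) * (t ^ (-sigmaStar N α β + 1 - γ)))) ≤ eLpNorm (fun x => mildSol N α β G (fun (y : Euc N) (s : ℝ) => Set.indicator (Metric.ball (0 : Euc N) 1) (fun _ => (1 + s) ^ (-γ)) y) x t) p
          (volume.restrict {x : Euc N | ν * g t < ‖x‖ ∧ ‖x‖ < μ * g t})) ∧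
        (γ = 1 → ENNReal.ofReal (c * g t ^ ((N : ℝ) / p.toReal) * (Real.log (t ^ thetaV α β / g t) * (t ^ (-sigmaStar N α β) * Real.log t))) ≤ eLpNorm (fun x => mildSol N α β G (fun (y : Euc N) (s : ℝ) => Set.indicator (Metric.ball (0 : Euc N) 1) (fun _ => (1 + s) ^ (-γ)) y) x t) p
          (volume.restrict {x : Euc N | ν * g t < ‖x‖ ∧ ‖x‖ < μ * g t})) ∧
        (1 < γ → ENNReal.ofReal (c * g t ^ ((N : ℝ) / p.toReal) * (Real.log (t ^ thetaV α β / g t) * (t ^ (-sigmaStar N α β)))) ≤ eLpNorm (fun x => mildSol N α β G (fun (y : Euc N) (s : ℝ) => Set.indicator (Metric.ball (0 : Euc N) 1) (fun _ => (1 + s) ^ (-γ)) y) x t) p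
          (volume.restrict {x : Euc N | ν * g t < ‖x‖ ∧ ‖x‖ < μ * g t}))) := by
  intro ν μ hν hνμ
  have hGlog : ∀ ξ : Euc N, ξ ≠ 0 → ‖ξ‖ ≤ 1 → G ξ ≤ C₁ * (1 + |Real.log ‖ξ‖|) :=
    fun ξ hξ hξ1 => hNβ.lt_or_eq.elim (fun hN4 => (hGin₁ hN4 ξ hξ hξ1).trans
      (le_mul_of_one_le_right hC₁.le (le_add_of_nonneg_right (abs_nonneg _))))
      (fun hN4 => hGin₂ hN4 ξ hξ hξ1)
  have key := exists_eventually_ofReal_le_eLpNorm_annulus hN hα0 hα1 hβ0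
    (measurable_of_continuousOn_compl_singleton 0 hGcont) hC₁.le hGpos hGout hGlog γ p
    (zero_lt_one.trans_le hp1).ne' g hgtop ν μ hν hνμ
  obtain ⟨hρ₁, hρ₂, hρ₃⟩ := exists_eventually_mul_le_rpow_mul_integral (sigmaStar N α β) γ
  have hθ := thetaV_pos hα0 hβ0
  have hμ : 0 ≤ μ := by linarith
  refine exists_two_le_forall_ge_of_or hNβ.lt_or_eq (fun h => h.ne) (fun hN4 => ?_)
    (fun hN4 => ?_)
  · have hk := key (k := fun _ => 1) hc₁ (.of_forall fun _ => zero_le_one) (by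
      simpa only [mul_one] using
        eventually_le_apply_rpow_neg_smul hθ hgpos hgtop hgo hμ (hGlow₁ hN4))
    simp only [one_mul] at hk
    exact exists_eventually_and_of_trichotomy (fun hγ => hk (hρ₁ hγ)) (fun hγ => hk (hρ₂ hγ))
      (fun hγ => hk (hρ₃ hγ))
  · have hk := key (k := fun t => Real.log (t ^ thetaV α β / g t)) (half_pos hc₁)
      ((tendsto_log_rpow_div_atTop hgpos hgo).eventually_ge_atTop 0)
      (eventually_half_log_mul_le_apply_rpow_neg_smul hθ hgpos hgtop hgo hμ hc₁.le (hGlow₂ hN4))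
    exact exists_eventually_and_of_trichotomy (fun hγ => hk (hρ₁ hγ)) (fun hγ => hk (hρ₂ hγ))
      (fun hγ => hk (hρ₃ hγ))

theorem intermediate_lower_optimal
    (N : ℕ) (hN : 1 ≤ N) (α β : ℝ) (hα0 : 0 < α) (hα1 : α < 1)
    (hβ0 : 0 < β) (hβ1 : β ≤ 1) (hNβ : (N : ℝ) ≤ 4 * β)
    (G : Euc N → ℝ) (C₁ : ℝ) (hC₁ : 0 < C₁)
    (hGcont : ContinuousOn G {(0 : Euc N)}ᶜ)
    (hGpos : ∀ ξ : Euc N, ξ ≠ 0 → 0 < G ξ)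
    (hGin₁ : (N : ℝ) < 4 * β → ∀ ξ : Euc N, ξ ≠ 0 → ‖ξ‖ ≤ 1 → G ξ ≤ C₁)
    (hGin₂ : (N : ℝ) = 4 * β → ∀ ξ : Euc N, ξ ≠ 0 → ‖ξ‖ ≤ 1 →
      G ξ ≤ C₁ * (1 + |Real.log ‖ξ‖|))
    (hGout : ∀ ξ : Euc N, 1 ≤ ‖ξ‖ → G ξ ≤ C₁ * ‖ξ‖ ^ (-((N : ℝ) + 2 * β)))
    (c₁ : ℝ) (hc₁ : 0 < c₁)
    (hGlow₁ : (N : ℝ) < 4 * β → ∀ ξ : Euc N, ξ ≠ 0 → ‖ξ‖ ≤ 1 → c₁ ≤ G ξ)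
    (hGlow₂ : (N : ℝ) = 4 * β → ∀ ξ : Euc N, ξ ≠ 0 → ‖ξ‖ ≤ 1 →
      c₁ * (1 + |Real.log ‖ξ‖|) ≤ G ξ)
    (γ : ℝ)
    (p : ℝ≥0∞) (hp1 : 1 ≤ p)
    (g : ℝ → ℝ) (hgm : Measurable g) (hgpos : ∀ t : ℝ, 0 < t → 0 < g t)
    (hgtop : Filter.Tendsto g Filter.atTop Filter.atTop)
    (hgo : Filter.Tendsto (fun t => g t / t ^ thetaV α β) Filter.atTop (nhds 0)) :
    ∀ ν μ : ℝ, 0 < ν → ν < μ → ∃ c T : ℝ, 0 < c ∧ 2 ≤ T ∧ ∀ t : ℝ, T ≤ t →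
      ((N : ℝ) < 4 * β →
        (γ < 1 → ENNReal.ofReal (c * g t ^ ((N : ℝ) / p.toReal) * (t ^ (-sigmaStar N α β + 1 - γ))) ≤ eLpNorm (fun x => mildSol N α β G (fun (y : Euc N) (s : ℝ) => Set.indicator (Metric.ball (0 : Euc N) 1) (fun _ => (1 + s) ^ (-γ)) y) x t) p
          (volume.restrict {x : Euc N | ν * g t < ‖x‖ ∧ ‖x‖ < μ * g t})) ∧
        (γ = 1 → ENNReal.ofReal (c * g t ^ ((N : ℝ) / p.toReal) * (t ^ (-sigmaStar N α β) * Real.log t)) ≤ eLpNorm (fun x => mildSol N α β G (fun (y : Euc N) (s : ℝ) => Set.indicator (Metric.ball (0 : Euc N) 1) (fun _ => (1 + s) ^ (-γ)) y) x t) p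
          (volume.restrict {x : Euc N | ν * g t < ‖x‖ ∧ ‖x‖ < μ * g t})) ∧
        (1 < γ → ENNReal.ofReal (c * g t ^ ((N : ℝ) / p.toReal) * (t ^ (-sigmaStar N α β))) ≤ eLpNorm (fun x => mildSol N α β G (fun (y : Euc N) (s : ℝ) => Set.indicator (Metric.ball (0 : Euc N) 1) (fun _ => (1 + s) ^ (-γ)) y) x t) p
          (volume.restrict {x : Euc N | ν * g t < ‖x‖ ∧ ‖x‖ < μ * g t}))) ∧
      ((N : ℝ) = 4 * β →
        (γ < 1 → ENNReal.ofReal (c * g t ^ ((N : ℝ) / p.toReal) * (Real.log (t ^ thetaV α β / g t) * (t ^ (-sigmaStar N α β + 1 - γ)))) ≤ eLpNorm (fun x => mildSol N α β G (fun (y : Euc N) (s : ℝ) => Set.indicator (Metric.ball (0 : Euc N) 1) (fun _ => (1 + s) ^ (-γ)) y) x t) p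
          (volume.restrict {x : Euc N | ν * g t < ‖x‖ ∧ ‖x‖ < μ * g t})) ∧
        (γ = 1 → ENNReal.ofReal (c * g t ^ ((N : ℝ) / p.toReal) * (Real.log (t ^ thetaV α β / g t) * (t ^ (-sigmaStar N α β) * Real.log t))) ≤ eLpNorm (fun x => mildSol N α β G (fun (y : Euc N) (s : ℝ) => Set.indicator (Metric.ball (0 : Euc N) 1) (fun _ => (1 + s) ^ (-γ)) y) x t) p
          (volume.restrict {x : Euc N | ν * g t < ‖x‖ ∧ ‖x‖ < μ * g t})) ∧
        (1 < γ → ENNReal.ofReal (c * g t ^ ((N : ℝ) / p.toReal) * (Real.log (t ^ thetaV α β / g t) * (t ^ (-sigmaStar N α β)))) ≤ eLpNorm (fun x => mildSol N α β G (fun (y : Euc N) (s : ℝ) => Set.indicator (Metric.ball (0 : Euc N) 1) (fun _ => (1 + s) ^ (-γ)) y) x t) p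
          (volume.restrict {x : Euc N | ν * g t < ‖x‖ ∧ ‖x‖ < μ * g t}))) :=
  intermediate_lower_optimal_general N hN α β hα0 hα1 hβ0 hNβ G C₁ hC₁ hGcont hGpos hGin₁ hGin₂
    hGout c₁ hc₁ hGlow₁ hGlow₂ γ p hp1 g hgpos hgtop hgo
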